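/- arXiv:1905.11948 — 5 statements merged into one kernel-verified Lean document; each statement's English description precedes it below -/
import Mathlib

section
/- Let s_{k,i} denote a best tuple of monotonic bands of length k in the prefix T[i]: a minimum among the maxima of all monotonic bands of length k in T[i]. If s_{k,i} ≤ t_{i+1} + Δ (so t_{i+1} can extend a band of length k with best tuple s_{k,i}), then a best tuple of monotonic bands of length k+1 in T[i+1] equals min( s_{k+1,i}, max(s_{k,i}, t_{i+1}) ); otherwise it equals s_{k+1,i}. -/
/-- A monotonic band of length `k` (given by the strictly increasing index map `f`)
in the prefix `T[i] = (t 0, …, t (i-1))` with band-width `Δ`. -/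
def IsBandInPrefix (t : ℕ → ℝ) (Δ : ℝ) (i k : ℕ) (f : Fin k → ℕ) : Prop :=
  StrictMono f ∧ (∀ a, f a < i) ∧ ∀ a b : Fin k, a < b → t (f a) - t (f b) ≤ Δ

/-- The best tuple `s_{k,i}`: the minimum, over all monotonic bands of length `k` in
the prefix `T[i]`, of the band's maximal tuple (its maximum element), valued in
`EReal` so that it is `+∞` when no band of length `k` exists and `-∞` for `k = 0`. -/
noncomputable def bestTuple (t : ℕ → ℝ) (Δ : ℝ) (k i : ℕ) : EReal :=
  sInf { m : EReal | ∃ f : Fin k → ℕ, IsBandInPrefix t Δ i k f ∧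
    m = Finset.univ.sup (fun a => (t (f a) : EReal)) }

/-!
A band of length `k + 1` in `T[i+1]` either avoids its last element `t_{i+1}` (here `t i`), and
is then a band in `T[i]`, or ends with it; then dropping `t_{i+1}` leaves a band of length `k` in
`T[i]` whose maximum is at most `t_{i+1} + Δ`. Conversely `t_{i+1}` may be appended to any band
of length `k` in `T[i]` whose maximum is at most `t_{i+1} + Δ`. As `T[i]` is finite, `s_{k,i}` is
attained by a band whenever it is finite, and the recurrence follows.
-/

theorem Fin.snoc_rel_snoc_of_lt {α : Type*} {R : α → α → Prop} {k : ℕ} {f : Fin k → α} {x : α}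
    (hf : ∀ a b : Fin k, a < b → R (f a) (f b)) (hx : ∀ a, R (f a) x) :
    ∀ a b : Fin (k + 1), a < b →
      R (Fin.snoc (α := fun _ => α) f x a) (Fin.snoc (α := fun _ => α) f x b) := by
  intro a b hab
  obtain ⟨a, rfl⟩ := Fin.exists_castSucc_eq.mpr (Fin.ne_last_of_lt hab)
  induction b using Fin.lastCases with
  | last => simpa using hx a
  | cast b => simpa using hf a b (Fin.castSucc_lt_castSucc_iff.mp hab)

theorem Finset.sup_univ_fin_succ {α : Type*} [SemilatticeSup α] [OrderBot α] {k : ℕ}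
    (h : Fin (k + 1) → α) :
    Finset.univ.sup h = (Finset.univ.sup fun a : Fin k => h a.castSucc) ⊔ h (Fin.last k) := by
  rw [Fin.univ_castSuccEmb, Finset.sup_cons, Finset.sup_map, sup_comm]
  rfl

namespace IsBandInPrefix

variable {t : ℕ → ℝ} {Δ : ℝ} {i k : ℕ}

theorem mono {j : ℕ} {f : Fin k → ℕ} (hf : IsBandInPrefix t Δ i k f) (hij : i ≤ j) :
    IsBandInPrefix t Δ j k f :=
  ⟨hf.1, fun a => (hf.2.1 a).trans_le hij, hf.2.2⟩

theorem snoc {f : Fin k → ℕ} (hf : IsBandInPrefix t Δ i k f) (hle : ∀ a, t (f a) ≤ t i + Δ) :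
    IsBandInPrefix t Δ (i + 1) (k + 1) (Fin.snoc f i) := by
  obtain ⟨hmono, hlt, hband⟩ := hf
  have hsnoc_mono : StrictMono (Fin.snoc f i : Fin (k + 1) → ℕ) :=
    Fin.snoc_rel_snoc_of_lt (fun a b hab => hmono hab) hlt
  refine ⟨hsnoc_mono, fun a => Nat.lt_succ_of_le ?_, ?_⟩
  · simpa using hsnoc_mono.monotone (Fin.le_last a)
  · exact Fin.snoc_rel_snoc_of_lt (R := fun x y => t x - t y ≤ Δ) hband fun a => by
      linarith [hle a]

theorem succ_cases {g : Fin (k + 1) → ℕ} (hg : IsBandInPrefix t Δ (i + 1) (k + 1) g) :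
    IsBandInPrefix t Δ i (k + 1) g ∨
      g (Fin.last k) = i ∧ IsBandInPrefix t Δ i k (Fin.init g) ∧
        ∀ a, t (Fin.init g a) ≤ t i + Δ := by
  obtain ⟨hmono, hlt, hband⟩ := hg
  have hle_last : ∀ a, g a ≤ g (Fin.last k) := fun a => hmono.monotone (Fin.le_last a)
  rcases (Nat.lt_succ_iff.mp (hlt (Fin.last k))).lt_or_eq with hlast | hlast
  · exact Or.inl ⟨hmono, fun a => (hle_last a).trans_lt hlast, hband⟩
  · refine Or.inr ⟨hlast, ⟨hmono.comp Fin.strictMono_castSucc, fun a => ?_, fun a b hab => ?_⟩,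
      fun a => ?_⟩
    · exact hlast ▸ hmono (Fin.castSucc_lt_last a)
    · exact hband _ _ (Fin.castSucc_lt_castSucc_iff.mpr hab)
    · have := hband _ _ (Fin.castSucc_lt_last a)
      rw [hlast] at this
      exact sub_le_iff_le_add'.mp this

end IsBandInPrefix

section BestTuple

variable {t : ℕ → ℝ} {Δ : ℝ} {i k : ℕ}

/-- The maximal tuple of the subsequence indexed by `f`. -/
noncomputable def bandTop (t : ℕ → ℝ) {k : ℕ} (f : Fin k → ℕ) : EReal :=
  Finset.univ.sup fun a => (t (f a) : EReal)

theorem bandTop_le_coe_iff {f : Fin k → ℕ} {x : ℝ} : bandTop t f ≤ x ↔ ∀ a, t (f a) ≤ x := by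
  simp [bandTop, Finset.sup_le_iff]

theorem bandTop_succ (g : Fin (k + 1) → ℕ) :
    bandTop t g = max (bandTop t (Fin.init g)) (t (g (Fin.last k))) :=
  Finset.sup_univ_fin_succ _

theorem bestTuple_le_bandTop {f : Fin k → ℕ} (hf : IsBandInPrefix t Δ i k f) :
    bestTuple t Δ k i ≤ bandTop t f :=
  sInf_le ⟨f, hf, rfl⟩

theorem le_bestTuple {m : EReal} (h : ∀ f, IsBandInPrefix t Δ i k f → m ≤ bandTop t f) :
    m ≤ bestTuple t Δ k i :=
  le_sInf <| by
    rintro _ ⟨f, hf, rfl⟩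
    exact h f hf

theorem exists_bandTop_eq_bestTuple (h : bestTuple t Δ k i ≠ ⊤) :
    ∃ f, IsBandInPrefix t Δ i k f ∧ bandTop t f = bestTuple t Δ k i := by
  set S := { m : EReal | ∃ f : Fin k → ℕ, IsBandInPrefix t Δ i k f ∧ m = bandTop t f }
  have hfin : S.Finite := by
    refine (Set.finite_range fun φ : Fin k → Fin i => bandTop t fun a => (φ a : ℕ)).subset ?_
    rintro _ ⟨f, hf, rfl⟩
    exact ⟨fun a => ⟨f a, hf.2.1 a⟩, rfl⟩
  have hne : S.Nonempty := Set.nonempty_iff_ne_empty.mpr fun hS => h <| by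
    change sInf S = ⊤
    rw [hS, sInf_empty]
  obtain ⟨f, hf, hfS⟩ := hne.csInf_mem hfin
  exact ⟨f, hf, hfS.symm⟩

theorem bestTuple_succ_prefix_le : bestTuple t Δ k (i + 1) ≤ bestTuple t Δ k i :=
  le_bestTuple fun _ hf => bestTuple_le_bandTop (hf.mono i.le_succ)

theorem min_le_bestTuple_succ_succ :
    min (bestTuple t Δ (k + 1) i) (max (bestTuple t Δ k i) (t i)) ≤
      bestTuple t Δ (k + 1) (i + 1) := by
  refine le_bestTuple fun g hg => ?_
  rcases hg.succ_cases with hg | ⟨hlast, hinit, -⟩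
  · exact min_le_of_left_le (bestTuple_le_bandTop hg)
  · refine min_le_of_right_le ?_
    rw [bandTop_succ, hlast]
    exact max_le_max_right _ (bestTuple_le_bandTop hinit)

theorem bestTuple_succ_succ_le_max (h : bestTuple t Δ k i ≤ ((t i + Δ : ℝ) : EReal)) :
    bestTuple t Δ (k + 1) (i + 1) ≤ max (bestTuple t Δ k i) (t i) := by
  obtain ⟨f, hf, hftop⟩ := exists_bandTop_eq_bestTuple (h.trans_lt (EReal.coe_lt_top _)).ne
  have hle : ∀ a, t (f a) ≤ t i + Δ := bandTop_le_coe_iff.mp (hftop ▸ h)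
  calc bestTuple t Δ (k + 1) (i + 1) ≤ bandTop t (Fin.snoc f i : Fin (k + 1) → ℕ) :=
        bestTuple_le_bandTop (hf.snoc hle)
    _ = max (bestTuple t Δ k i) (t i) := by rw [bandTop_succ, Fin.init_snoc, Fin.snoc_last, hftop]

/-- If `t i` extends no band of length `k` in `T[i]`, it belongs to no band of length `k + 1`. -/
theorem bestTuple_succ_succ_of_not_le (h : ¬ bestTuple t Δ k i ≤ ((t i + Δ : ℝ) : EReal)) :
    bestTuple t Δ (k + 1) (i + 1) = bestTuple t Δ (k + 1) i := by
  refine bestTuple_succ_prefix_le.antisymm (le_bestTuple fun g hg => ?_)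
  rcases hg.succ_cases with hg | ⟨-, hinit, hle⟩
  · exact bestTuple_le_bandTop hg
  · exact absurd ((bestTuple_le_bandTop hinit).trans (bandTop_le_coe_iff.mpr hle)) h

end BestTuple

theorem stmt_3_general (t : ℕ → ℝ) (Δ : ℝ) (k i : ℕ) :
    (bestTuple t Δ k i ≤ (t i : EReal) + (Δ : EReal) →
      bestTuple t Δ (k + 1) (i + 1) =
        min (bestTuple t Δ (k + 1) i) (max (bestTuple t Δ k i) (t i : EReal))) ∧
    (¬ bestTuple t Δ k i ≤ (t i : EReal) + (Δ : EReal) →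
      bestTuple t Δ (k + 1) (i + 1) = bestTuple t Δ (k + 1) i) := by
  rw [← EReal.coe_add]
  refine ⟨fun h => ?_, bestTuple_succ_succ_of_not_le⟩
  exact (le_min bestTuple_succ_prefix_le (bestTuple_succ_succ_le_max h)).antisymm
    min_le_bestTuple_succ_succ

/-- recurrence for best tuples. If `s_{k,i} ≤ t_{i+1} + Δ` then
`s_{k+1,i+1} = min(s_{k+1,i}, max(s_{k,i}, t_{i+1}))`; otherwise `s_{k+1,i+1} = s_{k+1,i}`. -/
theorem stmt_3 (t : ℕ → ℝ) (Δ : ℝ) (hΔ : 0 ≤ Δ) (k i : ℕ) :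
    (bestTuple t Δ k i ≤ (t i : EReal) + (Δ : EReal) →
      bestTuple t Δ (k + 1) (i + 1) =
        min (bestTuple t Δ (k + 1) i) (max (bestTuple t Δ k i) (t i : EReal))) ∧
    (¬ bestTuple t Δ k i ≤ (t i : EReal) + (Δ : EReal) →
      bestTuple t Δ (k + 1) (i + 1) = bestTuple t Δ (k + 1) i) :=
  stmt_3_general t Δ k i
end

section
/- For each prefix length i, the best tuples are monotonically ordered by band length: for all k_1 < k_2, s_{k_1,i} ≤ s_{k_2,i}. -/
/-- for each prefix length `i`, the best tuples are monotonically
ordered by band length: `k₁ < k₂ → s_{k₁,i} ≤ s_{k₂,i}`. -/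
theorem stmt_4 (t : ℕ → ℝ) (Δ : ℝ) (hΔ : 0 ≤ Δ) (i : ℕ) :
    ∀ k₁ k₂ : ℕ, k₁ < k₂ → bestTuple t Δ k₁ i ≤ bestTuple t Δ k₂ i := by
  intro k₁ k₂ hk
  apply le_sInf
  rintro m ⟨f, ⟨hsm, hlt, hband⟩, rfl⟩
  have hle : k₁ ≤ k₂ := hk.le
  refine sInf_le_of_le (b := Finset.univ.sup
    (fun a : Fin k₁ => (t (f (Fin.castLE hle a)) : EReal))) ?_ ?_
  · exact ⟨fun a => f (Fin.castLE hle a),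
      ⟨hsm.comp (Fin.strictMono_castLE hle), fun a => hlt _,
        fun a b hab => hband _ _ (by simpa using hab)⟩, rfl⟩
  · apply Finset.sup_le
    intro a _
    exact Finset.le_sup (f := fun b : Fin k₂ => (t (f b) : EReal))
      (Finset.mem_univ (Fin.castLE hle a))
end

section
/- If t_{i+1} cannot extend any monotonic band of length k in T[i] whose maximal tuple equals the best tuple s_{k,i} (i.e., s_{k,i} - t_{i+1} > Δ), then t_{i+1} cannot extend any monotonic band of length k in T[i] at all; hence the best tuple of length k+1 in T[i+1] equals s_{k+1,i}. -/
/-- if `s_{k,i} - t_{i+1} > Δ` then `t_{i+1}` cannot extend any monotonic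
band of length `k` in `T[i]` (the max of every such band exceeds `t_{i+1}` by more than Δ),
and consequently `s_{k+1,i+1} = s_{k+1,i}`. -/
theorem stmt_6 (t : ℕ → ℝ) (Δ : ℝ) (hΔ : 0 ≤ Δ) (k i : ℕ)
    (h : bestTuple t Δ k i - (t i : EReal) > (Δ : EReal)) :
    (∀ f : Fin k → ℕ, IsBandInPrefix t Δ i k f →
      Finset.univ.sup (fun a => (t (f a) : EReal)) - (t i : EReal) > (Δ : EReal)) ∧
    bestTuple t Δ (k + 1) (i + 1) = bestTuple t Δ (k + 1) i := by
  have part1 : ∀ f : Fin k → ℕ, IsBandInPrefix t Δ i k f →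
      Finset.univ.sup (fun a => (t (f a) : EReal)) - (t i : EReal) > (Δ : EReal) := by
    intro f hf
    have hm : Finset.univ.sup (fun a => (t (f a) : EReal)) ∈
        { m : EReal | ∃ f : Fin k → ℕ, IsBandInPrefix t Δ i k f ∧
          m = Finset.univ.sup (fun a => (t (f a) : EReal)) } := ⟨f, hf, rfl⟩
    have hle : bestTuple t Δ k i ≤ Finset.univ.sup (fun a => (t (f a) : EReal)) :=
      sInf_le hm
    exact lt_of_lt_of_le h (EReal.sub_le_sub hle le_rfl)
  refine ⟨part1, ?_⟩
  have hset : { m : EReal | ∃ f : Fin (k+1) → ℕ, IsBandInPrefix t Δ (i+1) (k+1) f ∧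
        m = Finset.univ.sup (fun a => (t (f a) : EReal)) } =
      { m : EReal | ∃ f : Fin (k+1) → ℕ, IsBandInPrefix t Δ i (k+1) f ∧
        m = Finset.univ.sup (fun a => (t (f a) : EReal)) } := by
    ext m
    constructor
    · rintro ⟨f, ⟨hmono, hlt, hband⟩, rfl⟩
      refine ⟨f, ⟨hmono, ?_, hband⟩, rfl⟩
      intro a
      by_contra hna
      have hfa : f a = i := by have := hlt a; omega
      have halast : a = Fin.last k := by
        by_contra hne
        have hlt' : a < Fin.last k := lt_of_le_of_ne (Fin.le_last a) hne
        have h1 := hmono hlt'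
        have h2 := hlt (Fin.last k)
        omega
      set g : Fin k → ℕ := fun b => f b.castSucc with hg_def
      have hg : IsBandInPrefix t Δ i k g := by
        refine ⟨hmono.comp Fin.strictMono_castSucc, ?_, ?_⟩
        · intro b
          have h1 := hmono (Fin.castSucc_lt_last b)
          rw [← halast, hfa] at h1
          exact h1
        · intro a' b' hab
          exact hband _ _ (by simpa using hab)
      have h1 := part1 g hg
      have hsup : Finset.univ.sup (fun b => (t (g b) : EReal)) ≤ ((Δ + t i : ℝ) : EReal) := by
        apply Finset.sup_le
        intro b _
        have hb := hband b.castSucc a (halast ▸ Fin.castSucc_lt_last b)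
        rw [hfa] at hb
        exact_mod_cast (by linarith : t (g b) ≤ Δ + t i)
      have h2 : Finset.univ.sup (fun b => (t (g b) : EReal)) - (t i : EReal) ≤ (Δ : EReal) := by
        calc Finset.univ.sup (fun b => (t (g b) : EReal)) - (t i : EReal)
            ≤ ((Δ + t i : ℝ) : EReal) - (t i : EReal) := EReal.sub_le_sub hsup le_rfl
          _ = (Δ : EReal) := by rw [← EReal.coe_sub]; norm_num
      exact absurd h1 (not_lt.mpr h2)
    · rintro ⟨f, ⟨hmono, hlt, hband⟩, rfl⟩
      exact ⟨f, ⟨hmono, fun a => Nat.lt_succ_of_lt (hlt a), hband⟩, rfl⟩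
  unfold bestTuple
  rw [hset]
end

section
/- Greedy splitting by pieces is not always optimal for bidirectional segmentation: there exists a sequence of tuples, a band-width Δ, and an error threshold ε such that every segmentation whose segment boundaries are restricted to piece boundaries has strictly smaller gain than the optimal unrestricted segmentation. -/
/-- The interval `[a, b)` is monotone within `Δ` in the ascending sense. -/
def AscOK (t : ℕ → ℝ) (Δ : ℝ) (a b : ℕ) : Prop :=
  ∀ i j : ℕ, a ≤ i → i < j → j < b → t i - t j ≤ Δ

/-- The interval `[a, b)` is monotone within `Δ` in the descending sense. -/
def DescOK (t : ℕ → ℝ) (Δ : ℝ) (a b : ℕ) : Prop :=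
  ∀ i j : ℕ, a ≤ i → i < j → j < b → t j - t i ≤ Δ

/-- A pre-piece of the sequence `(t 0, …, t (n-1))`: a maximal contiguous interval
`[a, b)` that is monotone within `Δ` in the ascending or descending sense. -/
def IsPrePiece (t : ℕ → ℝ) (Δ : ℝ) (n a b : ℕ) : Prop :=
  a < b ∧ b ≤ n ∧
  ((AscOK t Δ a b ∧ (a = 0 ∨ ¬ AscOK t Δ (a - 1) b) ∧ (b = n ∨ ¬ AscOK t Δ a (b + 1))) ∨
   (DescOK t Δ a b ∧ (a = 0 ∨ ¬ DescOK t Δ (a - 1) b) ∧ (b = n ∨ ¬ DescOK t Δ a (b + 1))))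

/-- A piece boundary: an endpoint of the whole sequence or of some pre-piece.  Pieces
are the intervals between consecutive piece boundaries (separating overlaps of
pre-pieces), so a segmentation is piece-restricted iff all its cut points are
piece boundaries. -/
def PieceBoundary (t : ℕ → ℝ) (Δ : ℝ) (n i : ℕ) : Prop :=
  i = 0 ∨ i = n ∨ ∃ a b, IsPrePiece t Δ n a b ∧ (i = a ∨ i = b)

/-- A bidirectional monotonic band of length `k` inside the interval `[a, b)`:
a subsequence that is ascending within `Δ` or descending within `Δ`. -/
def IsBidBandOn (t : ℕ → ℝ) (Δ : ℝ) (a b k : ℕ) (f : Fin k → ℕ) : Prop :=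
  StrictMono f ∧ (∀ j, a ≤ f j ∧ f j < b) ∧
  ((∀ i j : Fin k, i < j → t (f i) - t (f j) ≤ Δ) ∨
   (∀ i j : Fin k, i < j → t (f j) - t (f i) ≤ Δ))

/-- The length of a longest (bidirectional) monotonic band in the segment `[a, b)`. -/
noncomputable def lmbLenOn (t : ℕ → ℝ) (Δ : ℝ) (a b : ℕ) : ℕ :=
  sSup { k : ℕ | ∃ f : Fin k → ℕ, IsBidBandOn t Δ a b k f }

/-- The gain of the segment `[a, b)`: `(|LMB| - |outliers|) · |S| = (2·|LMB| - |S|) · |S|`. -/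
noncomputable def gainOn (t : ℕ → ℝ) (Δ : ℝ) (a b : ℕ) : ℤ :=
  (2 * (lmbLenOn t Δ a b : ℤ) - ((b - a : ℕ) : ℤ)) * ((b - a : ℕ) : ℤ)

/-- Feasibility of the segment `[a, b)` for error threshold `ε`: some longest monotonic
band can be chosen so that every run of contiguous outliers has length at most `ε`. -/
def FeasibleOn (t : ℕ → ℝ) (Δ : ℝ) (ε : ℕ) (a b : ℕ) : Prop :=
  ∃ (k : ℕ) (f : Fin k → ℕ), IsBidBandOn t Δ a b k f ∧ k = lmbLenOn t Δ a b ∧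
    ∀ c d : ℕ, a ≤ c → c ≤ d → d < b →
      (∀ j : ℕ, c ≤ j → j ≤ d → ∀ m : Fin k, f m ≠ j) → d + 1 - c ≤ ε

/-!
Take `Δ = 1`, `ε = 1` and the sequence `1, 0, 0, 2, 2, 0, 1, 0`. Its maximal ascending pre-pieces
are `[0, 5)`, `[5, 8)` and its maximal descending ones `[0, 3)`, `[3, 8)`, so the only piece
boundaries are `0, 3, 5, 8`. Cutting at `7` instead is feasible and has gain `35 + 1 = 36`: the band
`0, 1, 2, 3, 4, 6` of `[0, 7)` is ascending within `1` and leaves the single outlier `5`.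
A segment of length `ℓ` never gains more than `ℓ²`, and the whole sequence, which has no band of
length `7`, gains at most `32`; with the potential `0, 9, 25, 35` at `0, 3, 5, 8` every segment
between piece boundaries gains at most the increase of the potential, so every piece-restricted
segmentation gains at most `35`.
-/

open Finset

section Bands

variable {t : ℕ → ℝ} {Δ : ℝ} {a b k : ℕ} {f : Fin k → ℕ}

lemma IsBidBandOn.card_le_of_forall_mem (hf : IsBidBandOn t Δ a b k f) {s : Finset ℕ}
    (hs : ∀ j, f j ∈ s) : k ≤ #s := by
  simpa using card_le_card_of_injOn (s := univ) f (fun j _ => hs j) hf.1.injective.injOn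

lemma IsBidBandOn.le_sub (hf : IsBidBandOn t Δ a b k f) : k ≤ b - a := by
  simpa using hf.card_le_of_forall_mem fun j => mem_Ico.2 (hf.2.1 j)

lemma IsBidBandOn.exists_mem (hf : IsBidBandOn t Δ a b k f) {s : Finset ℕ}
    (hs : #(Ico a b \ s) < k) : ∃ j, f j ∈ s := by
  by_contra! h
  exact hs.not_ge (hf.card_le_of_forall_mem fun j => mem_sdiff.2 ⟨mem_Ico.2 (hf.2.1 j), h j⟩)

lemma IsBidBandOn.le_lmbLenOn (hf : IsBidBandOn t Δ a b k f) : k ≤ lmbLenOn t Δ a b :=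
  le_csSup ⟨b - a, fun _ ⟨_, hg⟩ => hg.le_sub⟩ ⟨f, hf⟩

lemma lmbLenOn_le {K : ℕ} (h : ∀ k (f : Fin k → ℕ), IsBidBandOn t Δ a b k f → k ≤ K) :
    lmbLenOn t Δ a b ≤ K :=
  csSup_le ⟨0, Fin.elim0, fun i => i.elim0, fun i => i.elim0, Or.inl fun i => i.elim0⟩
    fun k ⟨f, hf⟩ => h k f hf

lemma lmbLenOn_le_sub : lmbLenOn t Δ a b ≤ b - a :=
  lmbLenOn_le fun _ _ hf => hf.le_sub

/-- An ascending band misses `s₁` or `s₂`, a descending one misses `r₁` or `r₂`. -/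
lemma lmbLenOn_le_of_obstructions {K : ℕ} {s₁ s₂ r₁ r₂ : Finset ℕ}
    (hs : ∀ x ∈ s₁, ∀ y ∈ s₂, x < y ∧ Δ < t x - t y)
    (hr : ∀ x ∈ r₁, ∀ y ∈ r₂, x < y ∧ Δ < t y - t x)
    (hs₁ : #(Ico a b \ s₁) ≤ K) (hs₂ : #(Ico a b \ s₂) ≤ K)
    (hr₁ : #(Ico a b \ r₁) ≤ K) (hr₂ : #(Ico a b \ r₂) ≤ K) :
    lmbLenOn t Δ a b ≤ K := by
  refine lmbLenOn_le fun k f hf => le_of_not_gt fun hk => ?_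
  rcases hf.2.2 with hasc | hdesc
  · obtain ⟨i, hi⟩ := hf.exists_mem (hs₁.trans_lt hk)
    obtain ⟨j, hj⟩ := hf.exists_mem (hs₂.trans_lt hk)
    obtain ⟨hlt, hgap⟩ := hs _ hi _ hj
    exact (hasc i j (hf.1.lt_iff_lt.1 hlt)).not_gt hgap
  · obtain ⟨i, hi⟩ := hf.exists_mem (hr₁.trans_lt hk)
    obtain ⟨j, hj⟩ := hf.exists_mem (hr₂.trans_lt hk)
    obtain ⟨hlt, hgap⟩ := hr _ hi _ hj
    exact (hdesc i j (hf.1.lt_iff_lt.1 hlt)).not_gt hgap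

lemma isBidBandOn_singleton : IsBidBandOn t Δ a (a + 1) 1 ![a] :=
  ⟨Subsingleton.strictMono _, fun _ => by simp, Or.inl fun i j hij => absurd hij (by omega)⟩

lemma lmbLenOn_succ_self : lmbLenOn t Δ a (a + 1) = 1 :=
  le_antisymm (lmbLenOn_le_sub.trans_eq (by omega)) isBidBandOn_singleton.le_lmbLenOn

lemma feasibleOn_of_isBidBandOn {ε : ℕ} (hf : IsBidBandOn t Δ a b k f)
    (hk : k = lmbLenOn t Δ a b) (hcover : ∀ j ∈ Ico a (b - ε), ∃ i, f i ∈ Icc j (j + ε)) :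
    FeasibleOn t Δ ε a b := by
  refine ⟨k, f, hf, hk, fun c d hac hcd hdb hmiss => ?_⟩
  by_contra! hlong
  obtain ⟨i, hi⟩ := hcover c (mem_Ico.2 ⟨hac, by omega⟩)
  rw [mem_Icc] at hi
  exact hmiss (f i) hi.1 (by omega) i rfl

lemma feasibleOn_succ_self (ε : ℕ) : FeasibleOn t Δ ε a (a + 1) :=
  feasibleOn_of_isBidBandOn isBidBandOn_singleton lmbLenOn_succ_self.symm fun j hj =>
    ⟨0, by simp only [mem_Ico, mem_Icc, Matrix.cons_val_fin_one] at hj ⊢; omega⟩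

end Bands

section Gain

variable {t : ℕ → ℝ} {Δ : ℝ} {a b : ℕ}

lemma gainOn_le_of_lmbLenOn_le {K : ℕ} (h : lmbLenOn t Δ a b ≤ K) :
    gainOn t Δ a b ≤ (2 * (K : ℤ) - ((b - a : ℕ) : ℤ)) * ((b - a : ℕ) : ℤ) := by
  unfold gainOn
  gcongr

lemma gainOn_le_sq : gainOn t Δ a b ≤ ((b - a : ℕ) : ℤ) ^ 2 :=
  (gainOn_le_of_lmbLenOn_le lmbLenOn_le_sub).trans_eq (by ring)

lemma gainOn_succ_self : gainOn t Δ a (a + 1) = 1 := by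
  simp [gainOn, lmbLenOn_succ_self]

end Gain

lemma Fin.sum_le_sub_of_le_sub {M : Type*} [AddCommGroup M] [PartialOrder M]
    [IsOrderedAddMonoid M] {m : ℕ} {g : Fin m → M} {Φ : Fin (m + 1) → M}
    (h : ∀ k, g k ≤ Φ k.succ - Φ k.castSucc) : ∑ k, g k ≤ Φ (Fin.last m) - Φ 0 := by
  induction m with
  | zero => simp
  | succ m ih =>
    have hlast := h (Fin.last m)
    have hinit := ih (g := fun k => g k.castSucc) (Φ := fun k => Φ k.castSucc) fun k => h k.castSucc
    rw [Fin.sum_univ_castSucc]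
    calc _ ≤ (Φ (Fin.last m).castSucc - Φ 0) + (Φ (Fin.last m).succ - Φ (Fin.last m).castSucc) :=
          add_le_add hinit hlast
      _ = _ := by simp

def exampleValues : ℕ → ℤ
  | 0 => 1 | 1 => 0 | 2 => 0 | 3 => 2 | 4 => 2 | 5 => 0 | 6 => 1 | _ => 0

noncomputable def exampleSeq : ℕ → ℝ := fun i => exampleValues i

lemma exampleSeq_sub_le_one_iff (i j : ℕ) :
    exampleSeq i - exampleSeq j ≤ 1 ↔ exampleValues i ≤ exampleValues j + 1 := by
  unfold exampleSeq
  rw [sub_le_iff_le_add']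
  norm_cast

lemma one_lt_exampleSeq_sub_iff (i j : ℕ) :
    1 < exampleSeq i - exampleSeq j ↔ exampleValues j + 1 < exampleValues i := by
  rw [← not_le, exampleSeq_sub_le_one_iff, not_le]

lemma ascOK_exampleSeq_iff (a b : ℕ) : AscOK exampleSeq 1 a b ↔
    ∀ j < b, ∀ i < j, a ≤ i → exampleValues i ≤ exampleValues j + 1 :=
  ⟨fun h j hj i hij hai => (exampleSeq_sub_le_one_iff i j).1 (h i j hai hij hj),
    fun h i j hai hij hj => (exampleSeq_sub_le_one_iff i j).2 (h j hj i hij hai)⟩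

lemma descOK_exampleSeq_iff (a b : ℕ) : DescOK exampleSeq 1 a b ↔
    ∀ j < b, ∀ i < j, a ≤ i → exampleValues j ≤ exampleValues i + 1 :=
  ⟨fun h j hj i hij hai => (exampleSeq_sub_le_one_iff j i).1 (h i j hai hij hj),
    fun h i j hai hij hj => (exampleSeq_sub_le_one_iff j i).2 (h j hj i hij hai)⟩

set_option synthInstance.maxSize 1024 in
lemma isPrePiece_exampleSeq {a b : ℕ} (h : IsPrePiece exampleSeq 1 8 a b) :
    a ∈ ({0, 3, 5, 8} : Finset ℕ) ∧ b ∈ ({0, 3, 5, 8} : Finset ℕ) := by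
  have key : ∀ b < 9, ∀ a < b, IsPrePiece exampleSeq 1 8 a b →
      a ∈ ({0, 3, 5, 8} : Finset ℕ) ∧ b ∈ ({0, 3, 5, 8} : Finset ℕ) := by
    simp only [IsPrePiece, ascOK_exampleSeq_iff, descOK_exampleSeq_iff]
    decide
  exact key b (by have := h.2.1; omega) a h.1 h

lemma pieceBoundary_exampleSeq {i : ℕ} (h : PieceBoundary exampleSeq 1 8 i) :
    i ∈ ({0, 3, 5, 8} : Finset ℕ) := by
  rcases h with rfl | rfl | ⟨a, b, hab, rfl | rfl⟩
  · decide
  · decide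
  · exact (isPrePiece_exampleSeq hab).1
  · exact (isPrePiece_exampleSeq hab).2

lemma lmbLenOn_exampleSeq_zero_eight_le : lmbLenOn exampleSeq 1 0 8 ≤ 6 := by
  refine lmbLenOn_le_of_obstructions (s₁ := {3, 4}) (s₂ := {5, 7}) (r₁ := {1, 2}) (r₂ := {3, 4})
    ?_ ?_ (by decide) (by decide) (by decide) (by decide) <;>
  · simp only [one_lt_exampleSeq_sub_iff]
    decide

lemma isBidBandOn_exampleSeq_zero_seven : IsBidBandOn exampleSeq 1 0 7 6 ![0, 1, 2, 3, 4, 6] := by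
  refine ⟨Fin.strictMono_iff_lt_succ.2 (by decide), by decide, Or.inl fun i j hij => ?_⟩
  rw [exampleSeq_sub_le_one_iff]
  revert i j hij
  decide

lemma lmbLenOn_exampleSeq_zero_seven : lmbLenOn exampleSeq 1 0 7 = 6 := by
  refine le_antisymm ?_ isBidBandOn_exampleSeq_zero_seven.le_lmbLenOn
  refine lmbLenOn_le_of_obstructions (s₁ := {3, 4}) (s₂ := {5}) (r₁ := {1, 2}) (r₂ := {3, 4})
    ?_ ?_ (by decide) (by decide) (by decide) (by decide) <;>
  · simp only [one_lt_exampleSeq_sub_iff]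
    decide

lemma feasibleOn_exampleSeq_zero_seven : FeasibleOn exampleSeq 1 1 0 7 :=
  feasibleOn_of_isBidBandOn isBidBandOn_exampleSeq_zero_seven
    lmbLenOn_exampleSeq_zero_seven.symm (by decide)

def examplePotential : ℕ → ℤ
  | 0 => 0 | 3 => 9 | 5 => 25 | 8 => 35 | _ => 0

lemma gainOn_exampleSeq_le_potential {a b : ℕ} (ha : a ∈ ({0, 3, 5, 8} : Finset ℕ))
    (hb : b ∈ ({0, 3, 5, 8} : Finset ℕ)) (hab : a < b) :
    gainOn exampleSeq 1 a b ≤ examplePotential b - examplePotential a := by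
  have hsq : gainOn exampleSeq 1 a b ≤ ((b - a : ℕ) : ℤ) ^ 2 := gainOn_le_sq
  have hall : gainOn exampleSeq 1 0 8 ≤ 32 :=
    (gainOn_le_of_lmbLenOn_le lmbLenOn_exampleSeq_zero_eight_le).trans_eq (by norm_num)
  simp only [mem_insert, mem_singleton] at ha hb
  rcases ha with rfl | rfl | rfl | rfl <;> rcases hb with rfl | rfl | rfl | rfl <;>
    simp only [examplePotential] at hsq ⊢ <;> omega

/-- greedy splitting by pieces is not always optimal for bidirectional
segmentation: there is a sequence, a band-width `Δ > 0` and a threshold `ε` with a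
feasible segmentation whose gain strictly exceeds the gain of every feasible
segmentation whose cut points are all piece boundaries. -/
theorem stmt_16 :
    ∃ (n : ℕ) (t : ℕ → ℝ) (Δ : ℝ) (ε : ℕ), 0 < Δ ∧
      ∃ (m : ℕ) (c : Fin (m + 1) → ℕ), StrictMono c ∧ c 0 = 0 ∧ c (Fin.last m) = n ∧
        (∀ k : Fin m, FeasibleOn t Δ ε (c k.castSucc) (c k.succ)) ∧
        ∀ (m' : ℕ) (c' : Fin (m' + 1) → ℕ), StrictMono c' → c' 0 = 0 →
          c' (Fin.last m') = n →
          (∀ k : Fin m', FeasibleOn t Δ ε (c' k.castSucc) (c' k.succ)) →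
          (∀ k : Fin (m' + 1), PieceBoundary t Δ n (c' k)) →
          (∑ k : Fin m', gainOn t Δ (c' k.castSucc) (c' k.succ)) <
          (∑ k : Fin m, gainOn t Δ (c k.castSucc) (c k.succ)) := by
  refine ⟨8, exampleSeq, 1, 1, one_pos, 2, ![0, 7, 8], Fin.strictMono_iff_lt_succ.2 (by decide),
    rfl, rfl, ?_, ?_⟩
  · intro k
    fin_cases k
    · exact feasibleOn_exampleSeq_zero_seven
    · exact feasibleOn_succ_self 1
  · intro m' c' hc' h0 hlast _ hpiece
    have hoptimal : ∑ k : Fin 2, gainOn exampleSeq 1 (![0, 7, 8] k.castSucc) (![0, 7, 8] k.succ)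
        = 36 := by
      have h07 : gainOn exampleSeq 1 0 7 = 35 := by
        simp [gainOn, lmbLenOn_exampleSeq_zero_seven]
      simp [Fin.sum_univ_two, h07, gainOn_succ_self (a := 7)]
    have hrestricted : ∑ k : Fin m', gainOn exampleSeq 1 (c' k.castSucc) (c' k.succ)
        ≤ examplePotential (c' (Fin.last m')) - examplePotential (c' 0) :=
      Fin.sum_le_sub_of_le_sub (Φ := fun i => examplePotential (c' i)) fun k =>
        gainOn_exampleSeq_le_potential (pieceBoundary_exampleSeq (hpiece _))
          (pieceBoundary_exampleSeq (hpiece _)) (hc' k.castSucc_lt_succ)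
    rw [h0, hlast] at hrestricted
    rw [hoptimal]
    exact hrestricted.trans_lt (by decide)
end

section
/- Let e(φ) = min{ |t| : t ⊆ r, r \ t ⊨ φ } / |r| be the approximation error of a band OD φ on a table r of n tuples sorted by the left-hand side, and let L be a longest monotonic band of the sorted sequence of right-hand-side values. Then the minimal set of tuples whose removal makes φ hold has size n - |L|, hence e(φ) = (n - |L|)/n. -/
/-- for a table of `n` tuples sorted by the left-hand side, with
right-hand-side values `y`, if `L` is a longest monotonic band then the minimal number
of tuples whose removal makes the band OD hold on the remainder is `n - |L|`; hence the
approximation error is `e(φ) = (n - |L|) / n`. -/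
theorem stmt_17 (n : ℕ) (hn : 0 < n) (y : Fin n → ℝ) (Δ : ℝ) (hΔ : 0 ≤ Δ)
    (L : Finset (Fin n))
    (hL : ∀ a ∈ L, ∀ b ∈ L, a < b → y a - y b ≤ Δ)
    (hLmax : ∀ M : Finset (Fin n), (∀ a ∈ M, ∀ b ∈ M, a < b → y a - y b ≤ Δ) →
      M.card ≤ L.card) :
    IsLeast { k : ℕ | ∃ D : Finset (Fin n),
        (∀ a : Fin n, a ∉ D → ∀ b : Fin n, b ∉ D → a < b → y a - y b ≤ Δ) ∧
        k = D.card }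
      (n - L.card) ∧
    (((n - L.card : ℕ) : ℝ) / (n : ℝ) = ((n : ℝ) - (L.card : ℝ)) / (n : ℝ)) := by
  have hLn : L.card ≤ n := by
    simpa using L.card_le_univ
  constructor
  · constructor
    · exact ⟨Lᶜ, fun a ha b hb hab =>
        hL a (by simpa using ha) b (by simpa using hb) hab,
        by simp [Finset.card_compl]⟩
    · rintro k ⟨D, hD, rfl⟩
      have hM : Dᶜ.card ≤ L.card :=
        hLmax Dᶜ (fun a ha b hb hab =>
          hD a (by simpa using ha) b (by simpa using hb) hab)
      have h1 : Dᶜ.card = n - D.card := by simp [Finset.card_compl]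
      have h2 : D.card ≤ n := by simpa using D.card_le_univ
      omega
  · rw [Nat.cast_sub hLn]
end
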